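/- arXiv:2111.00863 — 2 statements merged into one kernel-verified Lean document; each statement's English description precedes it below -/
import Mathlib

section
/- The word a^n a a^n b a^n (equivalently a^{2n+1} b a^n) over {a,b} contains at most C·n distinct closed factors for some absolute constant C (i.e., the count is linear in n). -/
open List

variable {α : Type*}

/-- Number of occurrences of `u` as a factor of `w` (by starting position). -/
def occCount [DecidableEq α] (u w : List α) : ℕ :=
  ((Finset.range (w.length + 1)).filter
    (fun i => i + u.length ≤ w.length ∧ (w.drop i).take u.length = u)).card

/-- A finite word is closed if it has length ≤ 1 or it has a border occurring
exactly twice in it (as prefix and as suffix). -/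
def ClosedWord [DecidableEq α] (w : List α) : Prop :=
  w.length ≤ 1 ∨ ∃ k ∈ Finset.Ioo 0 w.length,
    (w.take k) <:+ w ∧ occCount (w.take k) w = 2

instance [DecidableEq α] (w : List α) : Decidable (ClosedWord w) := by
  unfold ClosedWord; infer_instance

/-- The finite set of distinct closed factors of `w`. -/
def closedFactors [DecidableEq α] (w : List α) : Finset (List α) :=
  (w.inits.flatMap List.tails).toFinset.filter ClosedWord

/-- The number of distinct closed factors of `w`. -/
def clCount [DecidableEq α] (w : List α) : ℕ := (closedFactors w).card

/-- `t` is a period of the finite word `w`. -/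
def HasPeriod (w : List α) (t : ℕ) : Prop := 0 < t ∧ w.drop t <+: w

/-- Factor of the infinite word `w` starting at `i` of length `m`. -/
def factorAt (w : ℕ → α) (i m : ℕ) : List α := (List.range m).map (fun j => w (i + j))

/-- `u` occurs in the infinite word `w` at position `i`. -/
def occursAt (w : ℕ → α) (u : List α) (i : ℕ) : Prop := factorAt w i u.length = u

/-- An infinite word is aperiodic if it is not eventually periodic. -/
def Aperiodic' (w : ℕ → α) : Prop := ¬ ∃ p, 0 < p ∧ ∃ N, ∀ n ≥ N, w (n + p) = w n

/-- A finite word is primitive if it is not an integer power of a shorter word. -/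
def Primitive (u : List α) : Prop :=
  u ≠ [] ∧ ∀ (v : List α) (k : ℕ), 2 ≤ k → u ≠ (List.replicate k v).flatten

/-! Each factor of a word over `{a, b}` with at most one `b` is a power of `a` or a word
`a^i b a^j`. A border of a closed `a^i b a^j` cannot contain the `b`: as a prefix it would carry
it at position `i`, as a suffix at position `k - 1 - j`, forcing `k = i + 1 + j`. So the border is
`a^k` with `k ≤ min i j`, and if `i ≠ j` it has a third occurrence inside the longer block of
`a`'s. Hence `i = j`, leaving at most `|w| + 1` powers of `a` and `|w|` words `a^i b a^i`. -/

lemma take_drop_eq_replicate {w : List α} {a : α} {p k : ℕ} (hk : p + k ≤ w.length)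
    (h : ∀ t (ht : t < k), w[p + t] = a) : (w.drop p).take k = replicate k a := by
  refine ext_getElem (by simp; omega) fun t ht _ => ?_
  simp only [getElem_take, getElem_drop, getElem_replicate]
  exact h t (by simp at ht; omega)

lemma getElem_replicate_append_cons {a b : α} {i j p : ℕ}
    (hp : p < (replicate i a ++ b :: replicate j a).length) :
    (replicate i a ++ b :: replicate j a)[p] = if p = i then b else a := by
  rw [getElem_append]
  simp only [length_replicate, getElem_replicate, getElem_cons]
  split_ifs <;> first | rfl | omega

section
variable [DecidableEq α]

lemma mem_closedFactors {u w : List α} : u ∈ closedFactors w ↔ u <:+: w ∧ ClosedWord u := by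
  simp only [closedFactors, Finset.mem_filter, mem_toFinset, mem_flatMap, mem_inits, mem_tails,
    infix_iff_suffix_prefix, and_comm (b := _ <:+ _)]

lemma three_le_occCount {u w : List α} {p q r : ℕ} (hpq : p < q) (hqr : q < r)
    (hr : r + u.length ≤ w.length) (hp : (w.drop p).take u.length = u)
    (hq : (w.drop q).take u.length = u) (hr' : (w.drop r).take u.length = u) :
    3 ≤ occCount u w := by
  have hsub : ({p, q, r} : Finset ℕ) ⊆ (Finset.range (w.length + 1)).filter
      (fun i => i + u.length ≤ w.length ∧ (w.drop i).take u.length = u) := by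
    intro i hi
    simp only [Finset.mem_insert, Finset.mem_singleton] at hi
    rw [Finset.mem_filter, Finset.mem_range]
    rcases hi with rfl | rfl | rfl <;> exact ⟨by omega, by omega, by assumption⟩
  have hcard : ({p, q, r} : Finset ℕ).card = 3 := by
    rw [Finset.card_insert_of_notMem (by simp; omega),
      Finset.card_insert_of_notMem (by simp; omega), Finset.card_singleton]
  exact hcard ▸ Finset.card_le_card hsub

lemma eq_of_closedWord_replicate_append_cons {a b : α} (hab : a ≠ b) {i j : ℕ}
    (h : ClosedWord (replicate i a ++ b :: replicate j a)) : i = j := by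
  set w := replicate i a ++ b :: replicate j a with hw
  have hlen : w.length = i + 1 + j := by simp [hw]; omega
  have hw_get : ∀ p (hp : p < w.length), w[p] = if p = i then b else a :=
    fun _ hp => getElem_replicate_append_cons hp
  rcases h with hshort | ⟨k, hk, hsuf, hocc⟩
  · omega
  rw [Finset.mem_Ioo] at hk
  rw [suffix_iff_eq_drop, length_take, min_eq_left hk.2.le] at hsuf
  have hborder : ∀ t (ht : t < k), w[t] = w[w.length - k + t] := fun t ht => by
    have := getElem_of_eq hsuf (i := t) (by simp; omega)
    rwa [getElem_take, getElem_drop] at this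
  have hki : k ≤ i := by
    by_contra! hik
    have := hborder i hik
    rw [hw_get, hw_get, if_pos rfl, if_neg (by omega)] at this
    exact hab this.symm
  have hkj : k ≤ j := by
    by_contra! hjk
    have := hborder (k - j - 1) (by omega)
    rw [hw_get, hw_get, if_neg (by omega), if_pos (by omega)] at this
    exact hab this
  have hocc_a : ∀ p, (∀ t < k, p + t ≠ i) → p + k ≤ w.length →
      (w.drop p).take (replicate k a).length = replicate k a := fun p hp hpk => by
    rw [length_replicate]
    exact take_drop_eq_replicate hpk fun t ht => by rw [hw_get, if_neg (hp t ht)]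
  have hu : w.take k = replicate k a := by simpa using hocc_a 0 (by omega) (by omega)
  by_contra hij
  have : 3 ≤ occCount (w.take k) w := by
    rw [hu]
    rcases Nat.lt_or_ge k i with hk_i | hi_k
    · exact three_le_occCount (q := 1) (r := i + 1) Nat.one_pos (by omega) (by simp; omega)
        (hocc_a 0 (by omega) (by omega)) (hocc_a 1 (by omega) (by omega))
        (hocc_a (i + 1) (by omega) (by omega))
    · exact three_le_occCount (q := i + 1) (r := i + 2) (Nat.succ_pos i) (by omega)
        (by simp; omega)
        (hocc_a 0 (by omega) (by omega)) (hocc_a (i + 1) (by omega) (by omega))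
        (hocc_a (i + 2) (by omega) (by omega))
  omega

lemma eq_replicate_or_eq_replicate_append_cons {a b : α} {u : List α}
    (hu : ∀ x ∈ u, x = a ∨ x = b) (hb : count b u ≤ 1) :
    u = replicate u.length a ∨ ∃ i j, u = replicate i a ++ b :: replicate j a := by
  have eq_replicate : ∀ v : List α, (∀ x ∈ v, x = a ∨ x = b) → b ∉ v → v = replicate v.length a :=
    fun v hv hbv => eq_replicate_of_mem fun x hx =>
      (hv x hx).resolve_right (by rintro rfl; exact hbv hx)
  by_cases hbu : b ∈ u
  · obtain ⟨x, y, rfl⟩ := append_of_mem hbu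
    simp only [count_append, count_cons_self] at hb
    have hx : b ∉ x := count_eq_zero.1 (by omega)
    have hy : b ∉ y := count_eq_zero.1 (by omega)
    refine Or.inr ⟨x.length, y.length, ?_⟩
    rw [← eq_replicate x (fun z hz => hu z (by simp [hz])) hx,
      ← eq_replicate y (fun z hz => hu z (by simp [hz])) hy]
  · exact Or.inl (eq_replicate u hu hbu)

theorem clCount_le_of_count_le_one {a b : α} (hab : a ≠ b) {w : List α}
    (hw : ∀ x ∈ w, x = a ∨ x = b) (hb : count b w ≤ 1) : clCount w ≤ 2 * w.length + 1 := by
  have hsub : closedFactors w ⊆ (Finset.range (w.length + 1)).image (replicate · a) ∪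
      (Finset.range w.length).image (fun i => replicate i a ++ b :: replicate i a) := by
    intro u hu
    obtain ⟨hinf, hcl⟩ := mem_closedFactors.1 hu
    have hlen := hinf.length_le
    simp only [Finset.mem_union, Finset.mem_image, Finset.mem_range]
    rcases eq_replicate_or_eq_replicate_append_cons (fun x hx => hw x (hinf.subset hx))
      ((hinf.count_le b).trans hb) with hrep | ⟨i, j, rfl⟩
    · exact Or.inl ⟨u.length, by omega, hrep.symm⟩
    · obtain rfl := eq_of_closedWord_replicate_append_cons hab hcl
      exact Or.inr ⟨i, by simp at hlen; omega, rfl⟩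
  calc clCount w ≤ _ := Finset.card_le_card hsub
    _ ≤ _ := Finset.card_union_le _ _
    _ ≤ (w.length + 1) + w.length :=
      add_le_add (Finset.card_image_le.trans (by simp)) (Finset.card_image_le.trans (by simp))
    _ = 2 * w.length + 1 := by ring

end

/-- the word a^{2n+1} b aⁿ has at most C·n distinct closed factors for an
absolute constant C. -/
theorem stmt9 [DecidableEq α] (a b : α) (hab : a ≠ b) :
    ∃ C : ℕ, ∀ n : ℕ, 1 ≤ n →
      clCount (List.replicate (2 * n + 1) a ++ [b] ++ List.replicate n a) ≤ C * n := by
  refine ⟨11, fun n hn => ?_⟩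
  have hletters : ∀ x ∈ replicate (2 * n + 1) a ++ [b] ++ replicate n a, x = a ∨ x = b := by
    intro x hx
    simp only [mem_append, mem_replicate, mem_singleton] at hx
    tauto
  have := clCount_le_of_count_le_one hab hletters (by simp [count_replicate, hab])
  simp only [length_append, length_replicate, length_singleton] at this
  omega
end

section
/- Let w be an infinite binary word and ε ∈ (0,1) such that there exists N with the property that for every factor x of w of length n > N, any two distinct occurrences of x in w are separated by distance at least (2−ε)^n. Then w has bounded exponent: there exists E such that every factor of w has exponent at most E. -/
open List

variable {α : Type*}

/-!
If `t` is a period of a factor of length `m`, the prefix of length `m - t` occurs again at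
distance `t`. For `m - t > N` the Beck condition gives `(2 - ε) ^ (m - t) ≤ t`, and Bernoulli's
inequality for `2 - ε = 1 + (1 - ε)` turns this into `m - t ≤ t / (1 - ε)`.
-/

lemma length_factorAt (w : ℕ → α) (i m : ℕ) : (factorAt w i m).length = m := by
  simp [factorAt]

lemma drop_factorAt (w : ℕ → α) (i m t : ℕ) :
    (factorAt w i m).drop t = factorAt w (i + t) (m - t) := by
  apply List.ext_getElem
  · simp [factorAt]
  · intro j _ _
    simp only [factorAt, List.getElem_drop, List.getElem_map, List.getElem_range, Nat.add_assoc]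

lemma take_factorAt (w : ℕ → α) (i m k : ℕ) (h : k ≤ m) :
    (factorAt w i m).take k = factorAt w i k := by
  apply List.ext_getElem
  · simp [factorAt, h]
  · intro j _ _
    simp [factorAt]

lemma factorAt_eq_factorAt_add_of_hasPeriod {w : ℕ → α} {i m t : ℕ}
    (hp : _root_.HasPeriod (factorAt w i m) t) :
    factorAt w i (m - t) = factorAt w (i + t) (m - t) := by
  have hprefix := List.prefix_iff_eq_take.mp hp.2
  rw [length_drop, length_factorAt, take_factorAt w i m _ (Nat.sub_le m t)] at hprefix
  rw [← hprefix, drop_factorAt]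

lemma natCast_le_div_of_one_add_pow_le {c t : ℝ} (hc : 0 < c) {n : ℕ}
    (h : (1 + c) ^ n ≤ t) : (n : ℝ) ≤ t / c := by
  have bernoulli := one_add_mul_le_pow (a := c) (by linarith) n
  rw [le_div_iff₀ hc]
  linarith

theorem stmt14_general (w : ℕ → Bool) (ε : ℝ) (hε1 : ε < 1)
    (hBeck : ∃ N : ℕ, ∀ n : ℕ, N < n → ∀ i j : ℕ,
      factorAt w i n = factorAt w j n → i < j → (2 - ε) ^ n ≤ (j : ℝ) - (i : ℝ)) :
    ∃ E : ℝ, ∀ i m t : ℕ, _root_.HasPeriod (factorAt w i m) t → (m : ℝ) ≤ E * (t : ℝ) := by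
  obtain ⟨N, hN⟩ := hBeck
  have hc : 0 < 1 - ε := by linarith
  refine ⟨N + 1 + 1 / (1 - ε), fun i m t hp => ?_⟩
  have ht : (1 : ℝ) ≤ t := by exact_mod_cast hp.1
  have hmt : (m : ℝ) - t ≤ N * t + t / (1 - ε) := by
    have hN_le : (N : ℝ) ≤ N * t := le_mul_of_one_le_right N.cast_nonneg ht
    have hdiv : 0 ≤ t / (1 - ε) := by positivity
    by_cases hlong : N < m - t
    · have hrep := factorAt_eq_factorAt_add_of_hasPeriod hp
      have hsep := hN (m - t) hlong i (i + t) hrep (Nat.lt_add_of_pos_right hp.1)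
      rw [show (2 : ℝ) - ε = 1 + (1 - ε) by ring, Nat.cast_add, add_sub_cancel_left] at hsep
      have := natCast_le_div_of_one_add_pow_le hc hsep
      push_cast [show t ≤ m by omega] at this
      linarith
    · have : (m : ℝ) ≤ t + N := by exact_mod_cast (show m ≤ t + N by omega)
      linarith
  calc (m : ℝ) ≤ t + N * t + t / (1 - ε) := by linarith
    _ = (N + 1 + 1 / (1 - ε)) * t := by ring

/-- an ε-Beck word (occurrences of each factor of length n > N separated
by distance at least (2-ε)ⁿ) has bounded exponent. -/
theorem stmt14 (w : ℕ → Bool) (ε : ℝ) (hε0 : 0 < ε) (hε1 : ε < 1)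
    (hBeck : ∃ N : ℕ, ∀ n : ℕ, N < n → ∀ i j : ℕ,
      factorAt w i n = factorAt w j n → i < j → (2 - ε) ^ n ≤ (j : ℝ) - (i : ℝ)) :
    ∃ E : ℝ, ∀ i m t : ℕ, _root_.HasPeriod (factorAt w i m) t → (m : ℝ) ≤ E * (t : ℝ) :=
  stmt14_general w ε hε1 hBeck
end
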